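/- arXiv:2108.09859 — 2 statements merged into one kernel-verified Lean document; each statement's English description precedes it below -/
import Mathlib

section
/- Singular value thresholding solves the nuclear-norm proximal problem: if A = P Σ Vᵀ is a singular value decomposition of A ∈ ℝ^{m×n} with Σ = diag(σ₁,…,σ_r), then the unique minimizer of X ↦ ½‖X − A‖_F² + ρ‖X‖₊ is P diag((σ₁ − ρ)₊, …, (σ_r − ρ)₊) Vᵀ. -/
/-!
Write `τᵢ = (σᵢ - ρ)₊` and `cᵢ = min σᵢ ρ / ρ ∈ [0, 1]`, so that `A = X⋆ + ρ G` with
`X⋆ = P diag(τ) Vᵀ` and `G = P diag(c) Vᵀ`. The matrix `G` is a contraction, hence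
`⟨G, X⟩ ≤ ‖X‖₊` for every `X` (diagonalize `XᵀX` and apply Cauchy–Schwarz column by column).
Conversely `‖X⋆‖₊ = ⟨U, X⋆⟩` for the polar factor `U` of `X⋆`, another contraction, and this is
at most `∑ τᵢ = ⟨G, X⋆⟩`. So `G` is a subgradient of the nuclear norm at `X⋆`, and expanding the
square gives `F X ≥ F X⋆ + ½ ‖X - X⋆‖_F²`, which yields both minimality and uniqueness.
-/

open Matrix

/-- The singular values of a real `m × n` matrix: square roots of the eigenvalues of `Aᵀ A`. -/
noncomputable def singularValues {m n : ℕ} (A : Matrix (Fin m) (Fin n) ℝ) : Fin n → ℝ :=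
  fun i => Real.sqrt ((Matrix.isHermitian_conjTranspose_mul_self A).eigenvalues i)

/-- The nuclear norm: the sum of the singular values. -/
noncomputable def nuclearNorm {m n : ℕ} (A : Matrix (Fin m) (Fin n) ℝ) : ℝ :=
  ∑ i, singularValues A i

namespace Matrix

section Contraction

variable {l m n : Type*} [Fintype l] [Fintype m] [Fintype n]

theorem dotProduct_le_sqrt_mul_sqrt (x y : n → ℝ) : x ⬝ᵥ y ≤ √(x ⬝ᵥ x) * √(y ⬝ᵥ y) := by
  simpa only [dotProduct, sq] using Real.sum_mul_le_sqrt_mul_sqrt Finset.univ x y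

theorem dotProduct_self_nonneg (v : n → ℝ) : 0 ≤ v ⬝ᵥ v := by
  simpa using dotProduct_self_star_nonneg v

omit [Fintype l] [Fintype n] in
theorem transpose_mul_apply_eq_mulVec (M : Matrix l m ℝ) (N : Matrix m n ℝ) (j : n) :
    (M * N)ᵀ j = M *ᵥ Nᵀ j :=
  rfl

omit [Fintype l] [Fintype n] in
theorem transpose_mul_self_apply_self (M : Matrix m n ℝ) (j : n) :
    (Mᵀ * M) j j = Mᵀ j ⬝ᵥ Mᵀ j :=
  rfl

theorem trace_transpose_mul_eq_sum (M N : Matrix m n ℝ) :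
    trace (Mᵀ * N) = ∑ i, ∑ j, M i j * N i j := by
  simp only [trace, diag_apply, mul_apply, transpose_apply]
  exact Finset.sum_comm

theorem dotProduct_mulVec_self (M : Matrix m n ℝ) (v : n → ℝ) :
    M *ᵥ v ⬝ᵥ M *ᵥ v = v ⬝ᵥ (Mᵀ * M) *ᵥ v := by
  rw [← mulVec_mulVec, dotProduct_mulVec v, vecMul_transpose]

/-- Operator norm at most one for the Euclidean norms, stated without square roots. -/
def IsContraction (M : Matrix m n ℝ) : Prop :=
  ∀ v, M *ᵥ v ⬝ᵥ M *ᵥ v ≤ v ⬝ᵥ v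

theorem IsContraction.mul {M : Matrix l m ℝ} {N : Matrix m n ℝ} (hM : M.IsContraction)
    (hN : N.IsContraction) : (M * N).IsContraction := fun v => by
  rw [← mulVec_mulVec]
  exact (hM _).trans (hN v)

theorem IsContraction.transpose {M : Matrix m n ℝ} (hM : M.IsContraction) :
    Mᵀ.IsContraction := fun v => by
  set a := Mᵀ *ᵥ v ⬝ᵥ Mᵀ *ᵥ v
  have h : a ≤ √a * √(v ⬝ᵥ v) := calc
    a = M *ᵥ (Mᵀ *ᵥ v) ⬝ᵥ v := by rw [dotProduct_comm, dotProduct_mulVec, ← mulVec_transpose]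
    _ ≤ √(M *ᵥ (Mᵀ *ᵥ v) ⬝ᵥ M *ᵥ (Mᵀ *ᵥ v)) * √(v ⬝ᵥ v) := dotProduct_le_sqrt_mul_sqrt _ _
    _ ≤ √a * √(v ⬝ᵥ v) := by gcongr; exact hM _
  have ha : 0 ≤ a := dotProduct_self_nonneg _
  nlinarith [Real.sq_sqrt ha, Real.sq_sqrt (dotProduct_self_nonneg v), Real.sqrt_nonneg a,
    Real.sqrt_nonneg (v ⬝ᵥ v)]

theorem isContraction_of_transpose_mul_self_eq_diagonal [DecidableEq n] {M : Matrix m n ℝ}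
    {e : n → ℝ} (hM : Mᵀ * M = diagonal e) (he : ∀ i, e i ≤ 1) : M.IsContraction := fun v => by
  rw [dotProduct_mulVec_self, hM]
  simp only [dotProduct, mulVec_diagonal]
  refine Finset.sum_le_sum fun i _ => ?_
  nlinarith [he i, mul_self_nonneg (v i)]

theorem isContraction_of_transpose_mul_self_eq_one [DecidableEq n] {M : Matrix m n ℝ}
    (hM : Mᵀ * M = 1) : M.IsContraction :=
  isContraction_of_transpose_mul_self_eq_diagonal (e := 1) hM fun _ => le_rfl

end Contraction

section Prox

variable {m n : Type*} [Fintype m] [Fintype n]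

theorem prox_objective_add_le {f : Matrix m n ℝ → ℝ} {ρ : ℝ} (hρ : 0 ≤ ρ) {A S G : Matrix m n ℝ}
    (hA : A = S + ρ • G) (hG : ∀ X, f S + trace (Gᵀ * (X - S)) ≤ f X) (X : Matrix m n ℝ) :
    (1 / 2) * (∑ i, ∑ j, (S i j - A i j) ^ 2) + ρ * f S
        + (1 / 2) * ∑ i, ∑ j, (X i j - S i j) ^ 2
      ≤ (1 / 2) * (∑ i, ∑ j, (X i j - A i j) ^ 2) + ρ * f X := by
  have hentry : ∀ i j, (X i j - A i j) ^ 2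
      = (S i j - A i j) ^ 2 + (X i j - S i j) ^ 2 - 2 * ρ * (G i j * (X - S) i j) := by
    intro i j
    simp only [hA, add_apply, smul_apply, sub_apply, smul_eq_mul]
    ring
  have hsub := mul_le_mul_of_nonneg_left (hG X) hρ
  simp only [hentry, Finset.sum_add_distrib, Finset.sum_sub_distrib, ← Finset.mul_sum]
  rw [trace_transpose_mul_eq_sum] at hsub
  linarith

theorem eq_of_sum_sum_sq_sub_nonpos {X Y : Matrix m n ℝ}
    (h : ∑ i, ∑ j, (X i j - Y i j) ^ 2 ≤ 0) : X = Y := by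
  ext i j
  have hrow := (Finset.sum_eq_zero_iff_of_nonneg fun i _ => by positivity).mp
    (h.antisymm (by positivity)) i (Finset.mem_univ _)
  have hij := (Finset.sum_eq_zero_iff_of_nonneg fun j _ => by positivity).mp
    hrow j (Finset.mem_univ _)
  exact sub_eq_zero.mp (pow_eq_zero_iff two_ne_zero |>.mp hij)

end Prox

end Matrix

section NuclearNorm

variable {m n r : ℕ}

theorem singularValues_nonneg (X : Matrix (Fin m) (Fin n) ℝ) (j : Fin n) :
    0 ≤ singularValues X j :=
  Real.sqrt_nonneg _

theorem exists_orthogonal_transpose_mul_eq_singularValues_sq (X : Matrix (Fin m) (Fin n) ℝ) :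
    ∃ W : Matrix (Fin n) (Fin n) ℝ, W * Wᵀ = 1 ∧ Wᵀ * W = 1 ∧
      (X * W)ᵀ * (X * W) = diagonal fun j => singularValues X j ^ 2 := by
  have hH := isHermitian_conjTranspose_mul_self X
  set W : Matrix (Fin n) (Fin n) ℝ := (hH.eigenvectorUnitary : Matrix (Fin n) (Fin n) ℝ)
  have hstar : star W = Wᵀ := conjTranspose_eq_transpose_of_trivial W
  have hdiag := hH.conjStarAlgAut_star_eigenvectorUnitary
  rw [Unitary.conjStarAlgAut_star_apply] at hdiag
  refine ⟨W, ?_, ?_, ?_⟩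
  · rw [← hstar]; exact Unitary.coe_mul_star_self _
  · rw [← hstar]; exact Unitary.coe_star_mul_self _
  · have hsq : (fun j => singularValues X j ^ 2) = hH.eigenvalues := funext fun j =>
      Real.sq_sqrt (eigenvalues_conjTranspose_mul_self_nonneg X j)
    rw [hsq, transpose_mul, Matrix.mul_assoc, ← Matrix.mul_assoc Xᵀ, ← Matrix.mul_assoc, ← hstar]
    exact hdiag

theorem trace_transpose_mul_le_nuclearNorm {G : Matrix (Fin m) (Fin n) ℝ} (hG : G.IsContraction)
    (X : Matrix (Fin m) (Fin n) ℝ) : trace (Gᵀ * X) ≤ nuclearNorm X := by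
  obtain ⟨W, hWWt, hWtW, hXW⟩ := exists_orthogonal_transpose_mul_eq_singularValues_sq X
  have hcol : ∀ j, (G * W)ᵀ j ⬝ᵥ (G * W)ᵀ j ≤ 1 := fun j => by
    have h1 : Wᵀ j ⬝ᵥ Wᵀ j = 1 := by rw [← transpose_mul_self_apply_self, hWtW, one_apply_eq]
    rw [transpose_mul_apply_eq_mulVec, ← h1]
    exact hG _
  calc trace (Gᵀ * X) = trace ((G * W)ᵀ * (X * W)) := by
        rw [transpose_mul, Matrix.mul_assoc, trace_mul_comm Wᵀ, Matrix.mul_assoc, Matrix.mul_assoc,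
          hWWt, Matrix.mul_one]
    _ = ∑ j, (G * W)ᵀ j ⬝ᵥ (X * W)ᵀ j := rfl
    _ ≤ ∑ j, √((G * W)ᵀ j ⬝ᵥ (G * W)ᵀ j) * √((X * W)ᵀ j ⬝ᵥ (X * W)ᵀ j) :=
        Finset.sum_le_sum fun j _ => dotProduct_le_sqrt_mul_sqrt _ _
    _ ≤ ∑ j, singularValues X j := Finset.sum_le_sum fun j _ => by
        have h2 : (X * W)ᵀ j ⬝ᵥ (X * W)ᵀ j = singularValues X j ^ 2 := by
          rw [← transpose_mul_self_apply_self, hXW, diagonal_apply_eq]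
        rw [h2, Real.sqrt_sq (singularValues_nonneg X j)]
        exact mul_le_of_le_one_left (singularValues_nonneg X j)
          (Real.sqrt_le_one.mpr (hcol j))

theorem exists_isContraction_trace_transpose_mul_eq_nuclearNorm
    (X : Matrix (Fin m) (Fin n) ℝ) :
    ∃ U : Matrix (Fin m) (Fin n) ℝ, U.IsContraction ∧ trace (Uᵀ * X) = nuclearNorm X := by
  obtain ⟨W, hWWt, hWtW, hXW⟩ := exists_orthogonal_transpose_mul_eq_singularValues_sq X
  set s := singularValues X
  -- the polar factor of `X`; `(s j)⁻¹ = 0` when `s j = 0` kills the null directions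
  set H := X * W * diagonal fun j => (s j)⁻¹
  have hHt : Hᵀ = (diagonal fun j => (s j)⁻¹) * (X * W)ᵀ := by
    rw [transpose_mul, diagonal_transpose]
  have hHH : Hᵀ * H = diagonal fun j => (s j)⁻¹ * (s j ^ 2 * (s j)⁻¹) := by
    rw [hHt, Matrix.mul_assoc, ← Matrix.mul_assoc (X * W)ᵀ, hXW, diagonal_mul_diagonal,
      diagonal_mul_diagonal]
  refine ⟨H * Wᵀ, ?_, ?_⟩
  · refine IsContraction.mul (isContraction_of_transpose_mul_self_eq_diagonal hHH fun j => ?_) ?_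
    · rcases eq_or_ne (s j) 0 with h | h
      · simp [h]
      · rw [sq, ← mul_assoc, ← mul_assoc, inv_mul_cancel₀ h, one_mul, mul_inv_cancel₀ h]
    · exact (isContraction_of_transpose_mul_self_eq_one hWtW).transpose
  · calc trace ((H * Wᵀ)ᵀ * X) = trace (Hᵀ * (X * W)) := by
          rw [transpose_mul, transpose_transpose, Matrix.mul_assoc, trace_mul_comm,
            Matrix.mul_assoc]
      _ = ∑ j, (s j)⁻¹ * s j ^ 2 := by
          rw [hHt, Matrix.mul_assoc, hXW, diagonal_mul_diagonal, trace_diagonal]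
      _ = ∑ j, s j := Finset.sum_congr rfl fun j _ => by
          rcases eq_or_ne (s j) 0 with h | h
          · simp [h]
          · rw [sq, ← mul_assoc, inv_mul_cancel₀ h, one_mul]
      _ = nuclearNorm X := rfl

theorem trace_transpose_mul_mul_diagonal_mul (U : Matrix (Fin m) (Fin n) ℝ)
    (P : Matrix (Fin m) (Fin r) ℝ) (τ : Fin r → ℝ) (V : Matrix (Fin n) (Fin r) ℝ) :
    trace (Uᵀ * (P * diagonal τ * Vᵀ)) = ∑ i, τ i * (Pᵀ * U * V) i i := by
  have hPUV : (Pᵀ * U * V)ᵀ = Vᵀ * Uᵀ * P := by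
    rw [transpose_mul, transpose_mul, transpose_transpose, Matrix.mul_assoc]
  rw [trace_mul_comm, Matrix.mul_assoc, Matrix.mul_assoc, trace_mul_comm, Matrix.mul_assoc,
    ← hPUV]
  simp only [trace, diag_apply, diagonal_mul, transpose_apply]

theorem transpose_mul_mul_apply_self_le_one {U : Matrix (Fin m) (Fin n) ℝ}
    (hU : U.IsContraction) {P : Matrix (Fin m) (Fin r) ℝ} {V : Matrix (Fin n) (Fin r) ℝ}
    (hP : Pᵀ * P = 1) (hV : Vᵀ * V = 1) (i : Fin r) : (Pᵀ * U * V) i i ≤ 1 := by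
  have hP1 : Pᵀ i ⬝ᵥ Pᵀ i = 1 := by rw [← transpose_mul_self_apply_self, hP, one_apply_eq]
  have hV1 : Vᵀ i ⬝ᵥ Vᵀ i = 1 := by rw [← transpose_mul_self_apply_self, hV, one_apply_eq]
  calc (Pᵀ * U * V) i i = Pᵀ i ⬝ᵥ U *ᵥ Vᵀ i := by rw [Matrix.mul_assoc]; rfl
    _ ≤ √(Pᵀ i ⬝ᵥ Pᵀ i) * √(U *ᵥ Vᵀ i ⬝ᵥ U *ᵥ Vᵀ i) := dotProduct_le_sqrt_mul_sqrt _ _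
    _ ≤ 1 := by
      rw [hP1, Real.sqrt_one, one_mul, Real.sqrt_le_one, ← hV1]
      exact hU _

theorem nuclearNorm_mul_diagonal_mul_le {P : Matrix (Fin m) (Fin r) ℝ}
    {V : Matrix (Fin n) (Fin r) ℝ} (hP : Pᵀ * P = 1) (hV : Vᵀ * V = 1) {τ : Fin r → ℝ}
    (hτ : ∀ i, 0 ≤ τ i) : nuclearNorm (P * diagonal τ * Vᵀ) ≤ ∑ i, τ i := by
  obtain ⟨U, hU, hUX⟩ :=
    exists_isContraction_trace_transpose_mul_eq_nuclearNorm (P * diagonal τ * Vᵀ)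
  rw [← hUX, trace_transpose_mul_mul_diagonal_mul]
  exact Finset.sum_le_sum fun i _ =>
    mul_le_of_le_one_right (hτ i) (transpose_mul_mul_apply_self_le_one hU hP hV i)

theorem isContraction_mul_diagonal_mul {P : Matrix (Fin m) (Fin r) ℝ}
    {V : Matrix (Fin n) (Fin r) ℝ} (hP : Pᵀ * P = 1) (hV : Vᵀ * V = 1) {c : Fin r → ℝ}
    (hc : ∀ i, |c i| ≤ 1) : (P * diagonal c * Vᵀ).IsContraction := by
  have hdiag : (diagonal c)ᵀ * diagonal c = diagonal fun i => c i * c i := by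
    rw [diagonal_transpose, diagonal_mul_diagonal]
  refine ((isContraction_of_transpose_mul_self_eq_one hP).mul
    (isContraction_of_transpose_mul_self_eq_diagonal hdiag fun i => ?_)).mul
    (isContraction_of_transpose_mul_self_eq_one hV).transpose
  rw [← abs_mul_abs_self]
  exact mul_le_one₀ (hc i) (abs_nonneg _) (hc i)

theorem transpose_mul_mul_diagonal_mul_mul {P : Matrix (Fin m) (Fin r) ℝ}
    {V : Matrix (Fin n) (Fin r) ℝ} (hP : Pᵀ * P = 1) (hV : Vᵀ * V = 1) (c : Fin r → ℝ) :
    Pᵀ * (P * diagonal c * Vᵀ) * V = diagonal c := by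
  rw [← Matrix.mul_assoc, ← Matrix.mul_assoc, hP, Matrix.one_mul, Matrix.mul_assoc, hV,
    Matrix.mul_one]

/-- `P * diagonal c * Vᵀ` is a subgradient of the nuclear norm at `P * diagonal τ * Vᵀ`. -/
theorem nuclearNorm_add_trace_le {P : Matrix (Fin m) (Fin r) ℝ}
    {V : Matrix (Fin n) (Fin r) ℝ} (hP : Pᵀ * P = 1) (hV : Vᵀ * V = 1) {τ c : Fin r → ℝ}
    (hτ : ∀ i, 0 ≤ τ i) (hc : ∀ i, |c i| ≤ 1) (hcτ : ∀ i, τ i * c i = τ i)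
    (X : Matrix (Fin m) (Fin n) ℝ) :
    nuclearNorm (P * diagonal τ * Vᵀ)
      + trace ((P * diagonal c * Vᵀ)ᵀ * (X - P * diagonal τ * Vᵀ)) ≤ nuclearNorm X := by
  have hS : trace ((P * diagonal c * Vᵀ)ᵀ * (P * diagonal τ * Vᵀ)) = ∑ i, τ i := by
    simp only [trace_transpose_mul_mul_diagonal_mul, transpose_mul_mul_diagonal_mul_mul hP hV,
      diagonal_apply_eq, hcτ]
  rw [Matrix.mul_sub, trace_sub, hS]
  linarith [nuclearNorm_mul_diagonal_mul_le hP hV hτ,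
    trace_transpose_mul_le_nuclearNorm (isContraction_mul_diagonal_mul hP hV hc) X]

end NuclearNorm

theorem softThreshold_decomposition {ρ s : ℝ} (hρ : 0 < ρ) (hs : 0 ≤ s) :
    s = max 0 (s - ρ) + ρ * (min s ρ / ρ) ∧ |min s ρ / ρ| ≤ 1 ∧
      max 0 (s - ρ) * (min s ρ / ρ) = max 0 (s - ρ) := by
  rcases le_total s ρ with h | h
  · have hs' : s / ρ ≤ 1 := (div_le_one hρ).mpr h
    simp [h, abs_of_nonneg (div_nonneg hs hρ.le), hs', mul_div_cancel₀ s hρ.ne']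
  · simp [h, hρ.ne']

/-- singular value thresholding solves the nuclear-norm proximal problem: if
`A = P (diagonal σ) Vᵀ` is an SVD of `A` (with `P`, `V` having orthonormal columns and `σ ≥ 0`),
then the unique minimizer of `X ↦ ½‖X - A‖_F² + ρ ‖X‖₊` is `P (diagonal (σ - ρ)₊) Vᵀ`. -/
theorem svt_solves_nuclear_prox (m n r : ℕ) (ρ : ℝ) (hρ : 0 < ρ)
    (A : Matrix (Fin m) (Fin n) ℝ)
    (P : Matrix (Fin m) (Fin r) ℝ) (V : Matrix (Fin n) (Fin r) ℝ) (σ : Fin r → ℝ)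
    (hP : Pᵀ * P = 1) (hV : Vᵀ * V = 1) (hσ : ∀ i, 0 ≤ σ i)
    (hA : A = P * Matrix.diagonal σ * Vᵀ) :
    let F : Matrix (Fin m) (Fin n) ℝ → ℝ :=
      fun X => (1 / 2) * (∑ i, ∑ j, (X i j - A i j) ^ 2) + ρ * nuclearNorm X
    let Xstar : Matrix (Fin m) (Fin n) ℝ :=
      P * Matrix.diagonal (fun i => max 0 (σ i - ρ)) * Vᵀ
    (∀ X, F Xstar ≤ F X) ∧ (∀ X, (∀ X', F X ≤ F X') → X = Xstar) := by
  intro F Xstar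
  set τ : Fin r → ℝ := fun i => max 0 (σ i - ρ)
  set c : Fin r → ℝ := fun i => min (σ i) ρ / ρ
  have hsplit i := softThreshold_decomposition hρ (hσ i)
  have hA' : A = Xstar + ρ • (P * diagonal c * Vᵀ) := by
    change A = P * diagonal τ * Vᵀ + ρ • (P * diagonal c * Vᵀ)
    rw [hA, ← Matrix.smul_mul, ← Matrix.mul_smul, ← diagonal_smul, ← Matrix.add_mul,
      ← Matrix.mul_add, diagonal_add]
    congr 3
    exact funext fun i => (hsplit i).1
  have hgrowth : ∀ X, F Xstar + (1 / 2) * ∑ i, ∑ j, (X i j - Xstar i j) ^ 2 ≤ F X :=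
    prox_objective_add_le hρ.le hA' <| nuclearNorm_add_trace_le hP hV (fun i => le_max_left _ _)
      (fun i => (hsplit i).2.1) (fun i => (hsplit i).2.2)
  have hsq (X : Matrix (Fin m) (Fin n) ℝ) : 0 ≤ ∑ i, ∑ j, (X i j - Xstar i j) ^ 2 := by positivity
  exact ⟨fun X => by linarith [hgrowth X, hsq X],
    fun X hX => eq_of_sum_sum_sq_sub_nonpos (by linarith [hgrowth X, hX Xstar])⟩
end

section
/- Proximal gradient descent with constant step size 1/L converges at rate O(1/t): if F = f + h with f convex, L-smooth, and h convex continuous, and θ_{t+1} = Prox_{1/L, h}(θ_t − (1/L)∇f(θ_t)), then for any minimizer θ* of F and all t ≥ 1, F(θ_t) − F(θ*) ≤ L‖θ₀ − θ*‖²/(2t). -/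
/-!
The proximal step minimizes a 1-strongly convex function, so it beats every competitor `w` by an
extra `½‖w - θ_{t+1}‖²`. Together with the descent lemma for `f` (from the Lipschitz gradient) and
the tangent-line bound (from convexity of `f`), this gives, for every `w`,
`F(θ_{t+1}) + L/2 ‖w - θ_{t+1}‖² ≤ F(w) + L/2 ‖w - θ_t‖²`.
With `w = θ_t` the values `F(θ_t)` decrease; with `w = θ*` the distances telescope over the first
`t` steps, giving `t (F(θ_t) - F(θ*)) ≤ L/2 ‖θ₀ - θ*‖²`.
-/

open RealInnerProductSpace Set Filter

section StrongConvexity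

variable {E : Type*} [NormedAddCommGroup E] [InnerProductSpace ℝ E]

theorem StrongConvexOn.add_sq_norm_sub_le_of_isMinOn {g : E → ℝ} {m : ℝ} {a : E}
    (hg : StrongConvexOn univ m g) (ha : IsMinOn g univ a) (w : E) :
    g a + m / 2 * ‖w - a‖ ^ 2 ≤ g w := by
  have hseg : ∀ s ∈ Ioo (0 : ℝ) 1, g a + (1 - s) * (m / 2 * ‖w - a‖ ^ 2) ≤ g w := by
    rintro s ⟨hs0, hs1⟩
    have hmin := isMinOn_univ_iff.mp ha ((1 - s) • a + s • w)
    have hconv := hg.2 (mem_univ a) (mem_univ w) (sub_nonneg.mpr hs1.le) hs0.le (by ring)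
    rw [norm_sub_rev] at hconv
    simp only [smul_eq_mul] at hconv
    have hscaled : s * (g a + (1 - s) * (m / 2 * ‖w - a‖ ^ 2)) ≤ s * g w := by linarith
    exact le_of_mul_le_mul_left hscaled hs0
  have hcont : Continuous fun s : ℝ => g a + (1 - s) * (m / 2 * ‖w - a‖ ^ 2) := by fun_prop
  have hlim := tendsto_nhdsWithin_of_tendsto_nhds (s := Ioi 0) (hcont.tendsto 0)
  rw [sub_zero, one_mul] at hlim
  exact le_of_tendsto hlim (eventually_of_mem (Ioo_mem_nhdsGT one_pos) hseg)

theorem ConvexOn.strongConvexOn_half_sq_norm_sub_add {φ : E → ℝ} (hφ : ConvexOn ℝ univ φ)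
    (y : E) : StrongConvexOn univ 1 (fun w => 1 / 2 * ‖w - y‖ ^ 2 + φ w) := by
  have haff : ConvexOn ℝ univ (fun w => ⟪-y, w⟫ + 1 / 2 * ‖y‖ ^ 2) :=
    ((innerₛₗ ℝ (-y)).convexOn convex_univ).add_const _
  have hsplit : (fun w => 1 / 2 * ‖w - y‖ ^ 2 + φ w - 1 / 2 * ‖w‖ ^ 2)
      = fun w => φ w + (⟪-y, w⟫ + 1 / 2 * ‖y‖ ^ 2) := by
    funext w
    rw [norm_sub_sq_real, inner_neg_left, real_inner_comm]
    ring
  rw [strongConvexOn_iff_convex, hsplit]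
  exact hφ.add haff

end StrongConvexity

section Smooth

variable {E : Type*} [NormedAddCommGroup E] [InnerProductSpace ℝ E] [CompleteSpace E] {f : E → ℝ}

theorem hasDerivAt_comp_add_smul {x u : E} {s : ℝ} (hf : DifferentiableAt ℝ f (x + s • u)) :
    HasDerivAt (fun r : ℝ => f (x + r • u)) ⟪gradient f (x + s • u), u⟫ s := by
  have hline : HasDerivAt (fun r : ℝ => x + r • u) u s := by
    simpa using ((hasDerivAt_id s).smul_const u).const_add x
  simpa [Function.comp_def] using
    (hasGradientAt_iff_hasFDerivAt.mp hf.hasGradientAt).comp_hasDerivAt s hline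

theorem ConvexOn.add_inner_gradient_le (hconv : ConvexOn ℝ univ f) {x : E}
    (hf : DifferentiableAt ℝ f x) (w : E) : f x + ⟪gradient f x, w - x⟫ ≤ f w := by
  have hline : ConvexOn ℝ univ (fun s : ℝ => f (x + s • (w - x))) := by
    simpa [Function.comp_def, AffineMap.lineMap_apply, add_comm] using
      hconv.comp_affineMap (AffineMap.lineMap x w)
  have hderiv := hasDerivAt_comp_add_smul (s := 0) (u := w - x) (by simpa using hf)
  have hslope := hline.le_slope_of_hasDerivAt (mem_univ 0) (mem_univ 1) one_pos hderiv
  simp only [zero_smul, add_zero, slope_def_field, one_smul, add_sub_cancel, sub_zero,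
    div_one] at hslope
  linarith

theorem apply_add_le_of_lipschitz_gradient {L : ℝ} (hf : Differentiable ℝ f)
    (hlip : ∀ x y, ‖gradient f x - gradient f y‖ ≤ L * ‖x - y‖) (x u : E) :
    f (x + u) ≤ f x + ⟪gradient f x, u⟫ + L / 2 * ‖u‖ ^ 2 := by
  set ψ : ℝ → ℝ := fun s => f (x + s • u) - s * ⟪gradient f x, u⟫ - L / 2 * ‖u‖ ^ 2 * s ^ 2
  have hψ : ∀ s, HasDerivAt ψ
      (⟪gradient f (x + s • u), u⟫ - ⟪gradient f x, u⟫ - L * ‖u‖ ^ 2 * s) s := by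
    intro s
    refine (((hasDerivAt_comp_add_smul (hf _)).sub ((hasDerivAt_id s).mul_const _)).sub
      ((hasDerivAt_pow 2 s).const_mul (L / 2 * ‖u‖ ^ 2))).congr_deriv ?_
    simp only [one_mul, Nat.cast_ofNat]
    ring
  have hanti : AntitoneOn ψ (Icc 0 1) := by
    refine antitoneOn_of_hasDerivWithinAt_nonpos (convex_Icc 0 1)
      (fun s _ => (hψ s).continuousAt.continuousWithinAt) (fun s _ => (hψ s).hasDerivWithinAt) ?_
    intro s hs
    rw [interior_Icc] at hs
    have hgrad : ⟪gradient f (x + s • u) - gradient f x, u⟫ ≤ L * s * ‖u‖ ^ 2 :=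
      calc ⟪gradient f (x + s • u) - gradient f x, u⟫
          ≤ ‖gradient f (x + s • u) - gradient f x‖ * ‖u‖ := real_inner_le_norm _ _
        _ ≤ L * ‖x + s • u - x‖ * ‖u‖ := by gcongr; exact hlip _ _
        _ = L * s * ‖u‖ ^ 2 := by
          rw [add_sub_cancel_left, norm_smul, Real.norm_of_nonneg hs.1.le]
          ring
    rw [inner_sub_left] at hgrad
    linarith
  have h01 := hanti (left_mem_Icc.mpr zero_le_one) (right_mem_Icc.mpr zero_le_one) zero_le_one
  simp only [ψ, zero_smul, add_zero, one_smul, zero_mul, sub_zero, one_mul, one_pow, mul_one,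
    ne_eq, OfNat.ofNat_ne_zero, not_false_eq_true, zero_pow] at h01
  linarith

/-- `a = Prox_{1/L, h}(x - (1/L) ∇f x)`, with the minimizer given rather than chosen. -/
def IsProxGradStep (f h : E → ℝ) (L : ℝ) (x a : E) : Prop :=
  IsMinOn (fun w => 1 / 2 * ‖w - (x - (1 / L) • gradient f x)‖ ^ 2 + 1 / L * h w) univ a

theorem IsProxGradStep.add_sq_norm_sub_le {h : E → ℝ} {L : ℝ} {x a : E}
    (ha : IsProxGradStep f h L x a) (hL : 0 < L)
    (hf_conv : ConvexOn ℝ univ f) (hf_diff : Differentiable ℝ f)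
    (hf_lip : ∀ x y, ‖gradient f x - gradient f y‖ ≤ L * ‖x - y‖)
    (hh_conv : ConvexOn ℝ univ h) (w : E) :
    f a + h a + L / 2 * ‖w - a‖ ^ 2 ≤ f w + h w + L / 2 * ‖w - x‖ ^ 2 := by
  set g := gradient f x
  have hprox := ((hh_conv.smul (one_div_nonneg.mpr hL.le)).strongConvexOn_half_sq_norm_sub_add
    (x - (1 / L) • g)).add_sq_norm_sub_le_of_isMinOn ha w
  have hexpand : ∀ v, ‖v - (x - (1 / L) • g)‖ ^ 2
      = ‖v - x‖ ^ 2 + 2 / L * ⟪g, v - x⟫ + ‖(1 / L) • g‖ ^ 2 := fun v => by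
    rw [show v - (x - (1 / L) • g) = (v - x) + (1 / L) • g by abel, norm_add_sq_real,
      real_inner_smul_right, real_inner_comm]
    ring
  have hdescent := apply_add_le_of_lipschitz_gradient hf_diff hf_lip x (a - x)
  have htangent := hf_conv.add_inner_gradient_le (hf_diff x) w
  simp only [smul_eq_mul, hexpand] at hprox
  rw [add_sub_cancel] at hdescent
  field_simp at hprox
  linarith

end Smooth

theorem nat_mul_sub_add_le_of_antitone {F D : ℕ → ℝ} {c : ℝ} (hF : Antitone F)
    (hstep : ∀ t, F (t + 1) + D (t + 1) ≤ c + D t) (t : ℕ) :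
    t * (F t - c) + D t ≤ D 0 := by
  induction t with
  | zero => simp
  | succ t ih =>
    have hmono : t * F (t + 1) ≤ t * F t := by gcongr; exact hF t.le_succ
    push_cast
    linarith [hstep t]

theorem prox_grad_convergence_general (n : ℕ) (L : ℝ) (hL : 0 < L)
    (f h : EuclideanSpace ℝ (Fin n) → ℝ)
    (hf_conv : ConvexOn ℝ Set.univ f) (hf_diff : Differentiable ℝ f)
    (hf_lip : ∀ x y, ‖gradient f x - gradient f y‖ ≤ L * ‖x - y‖)
    (hh_conv : ConvexOn ℝ Set.univ h)
    (θstar : EuclideanSpace ℝ (Fin n))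
    (θ : ℕ → EuclideanSpace ℝ (Fin n))
    (hstep : ∀ t : ℕ, ∀ w,
      (1 / 2) * ‖θ (t + 1) - (θ t - (1 / L) • gradient f (θ t))‖ ^ 2 + (1 / L) * h (θ (t + 1))
        ≤ (1 / 2) * ‖w - (θ t - (1 / L) • gradient f (θ t))‖ ^ 2 + (1 / L) * h w) :
    ∀ t : ℕ, 1 ≤ t →
      (f (θ t) + h (θ t)) - (f θstar + h θstar) ≤ L * ‖θ 0 - θstar‖ ^ 2 / (2 * t) := by
  have hprox (t : ℕ) : IsProxGradStep f h L (θ t) (θ (t + 1)) := isMinOn_univ_iff.mpr (hstep t)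
  have hone_step (t : ℕ) := (hprox t).add_sq_norm_sub_le hL hf_conv hf_diff hf_lip hh_conv
  have hanti : Antitone fun t => f (θ t) + h (θ t) := antitone_nat_of_succ_le fun t => by
    have := hone_step t (θ t)
    rw [sub_self, norm_zero] at this
    linarith [mul_nonneg hL.le (sq_nonneg ‖θ t - θ (t + 1)‖)]
  intro t ht
  have hbound := nat_mul_sub_add_le_of_antitone (D := fun t => L / 2 * ‖θstar - θ t‖ ^ 2) hanti
    (fun t => hone_step t θstar) t
  have ht_pos : (0 : ℝ) < t := by exact_mod_cast ht
  rw [le_div_iff₀ (by positivity), norm_sub_rev]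
  linarith [mul_nonneg hL.le (sq_nonneg ‖θstar - θ t‖)]

/-- proximal gradient descent with constant step size `1/L` converges at rate
`O(1/t)`: if `F = f + h` with `f` convex and `L`-smooth, `h` convex continuous, and
`θ_{t+1} = Prox_{1/L,h}(θ_t - (1/L)∇f(θ_t))`, then for any minimizer `θ*` of `F` and all
`t ≥ 1`, `F(θ_t) - F(θ*) ≤ L ‖θ₀ - θ*‖² / (2 t)`. -/
theorem prox_grad_convergence (n : ℕ) (L : ℝ) (hL : 0 < L)
    (f h : EuclideanSpace ℝ (Fin n) → ℝ)
    (hf_conv : ConvexOn ℝ Set.univ f) (hf_diff : Differentiable ℝ f)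
    (hf_lip : ∀ x y, ‖gradient f x - gradient f y‖ ≤ L * ‖x - y‖)
    (hh_conv : ConvexOn ℝ Set.univ h) (hh_cont : Continuous h)
    (θstar : EuclideanSpace ℝ (Fin n))
    (hmin : ∀ w, f θstar + h θstar ≤ f w + h w)
    (θ : ℕ → EuclideanSpace ℝ (Fin n))
    (hstep : ∀ t : ℕ, ∀ w,
      (1 / 2) * ‖θ (t + 1) - (θ t - (1 / L) • gradient f (θ t))‖ ^ 2 + (1 / L) * h (θ (t + 1))
        ≤ (1 / 2) * ‖w - (θ t - (1 / L) • gradient f (θ t))‖ ^ 2 + (1 / L) * h w) :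
    ∀ t : ℕ, 1 ≤ t →
      (f (θ t) + h (θ t)) - (f θstar + h θstar) ≤ L * ‖θ 0 - θstar‖ ^ 2 / (2 * t) :=
  prox_grad_convergence_general n L hL f h hf_conv hf_diff hf_lip hh_conv θstar θ hstep
end
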